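/- Let a, b ≥ 0 with a + b > 0, and let X and Y be independent ℕ-valued random variables with X distributed as Poisson(a) and Y distributed as Poisson(b). Then E[ (X/(X+Y)) · 1_{X+Y ≥ 1} ] / P(X+Y ≥ 1) = a/(a+b); that is, the conditional expectation of X/(X+Y) given the event {X+Y ≥ 1} equals a/(a+b). -/

import Mathlib

/-!
Poisson variables satisfy the size-bias (Stein–Chen) identity `E[X f(X)] = a E[f(X + 1)]`.
Applied with `f = 1 / (· + Y)` it gives `E[X / (X + Y)] = a E[1 / (X + Y + 1)]`, and applied to `Y`
it gives `E[Y / (X + Y)] = b E[1 / (X + Y + 1)]`. Since `0 / 0 = 0`, the two left-hand sides add up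
to `P(X + Y ≥ 1)`, and the common positive factor `E[1 / (X + Y + 1)]` cancels in the ratio.
-/

open MeasureTheory ProbabilityTheory Real

open scoped NNReal Nat

lemma norm_natCast_div_natCast_add_le_one (j k : ℕ) : ‖(j : ℝ) / (j + k)‖ ≤ 1 := by
  rw [Real.norm_of_nonneg (by positivity)]
  exact div_le_one_of_le₀ (le_add_of_nonneg_right k.cast_nonneg) (by positivity)

lemma norm_inv_natCast_add_natCast_add_one_le_one (j k : ℕ) : ‖((j : ℝ) + k + 1)⁻¹‖ ≤ 1 := by
  rw [Real.norm_of_nonneg (by positivity)]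
  exact inv_le_one_of_one_le₀ (by linarith [j.cast_nonneg (α := ℝ), k.cast_nonneg (α := ℝ)])

namespace ProbabilityTheory

lemma hasLaw_of_measure_preimage_singleton {Ω 𝓧 : Type*} [MeasurableSpace Ω] [MeasurableSpace 𝓧]
    [Countable 𝓧] [MeasurableSingletonClass 𝓧] {P : Measure Ω} {ν : Measure 𝓧} {X : Ω → 𝓧}
    (hX : Measurable X) (h : ∀ x, P (X ⁻¹' {x}) = ν {x}) : HasLaw X ν P where
  aemeasurable := hX.aemeasurable
  map_eq := Measure.ext_of_singleton fun x ↦ by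
    rw [Measure.map_apply hX (measurableSet_singleton x), h]

lemma IndepFun.hasLaw_prodMk {Ω 𝓧 𝓨 : Type*} [MeasurableSpace Ω] [MeasurableSpace 𝓧]
    [MeasurableSpace 𝓨] {P : Measure Ω} [IsFiniteMeasure P] {μ : Measure 𝓧} {ν : Measure 𝓨}
    {X : Ω → 𝓧} {Y : Ω → 𝓨} (hXY : IndepFun X Y P) (hX : HasLaw X μ P) (hY : HasLaw Y ν P) :
    HasLaw (fun ω ↦ (X ω, Y ω)) (μ.prod ν) P where
  aemeasurable := hX.aemeasurable.prodMk hY.aemeasurable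
  map_eq := by
    rw [hXY.map_prod_eq_prod_map_map hX.aemeasurable hY.aemeasurable, hX.map_eq, hY.map_eq]

lemma poisson_succ_mul_natCast_add_one (r : ℝ≥0) (n : ℕ) :
    exp (-r) * r ^ (n + 1) / (n + 1)! * ((n + 1 : ℕ) : ℝ) = r * (exp (-r) * r ^ n / n !) := by
  rw [Nat.factorial_succ]
  push_cast
  field_simp
  ring

theorem integral_natCast_mul_poissonMeasure (r : ℝ≥0) (f : ℕ → ℝ) :
    ∫ n, (n : ℝ) * f n ∂Po(r) = r * ∫ n, f (n + 1) ∂Po(r) := by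
  simp only [integral_poissonMeasure, smul_eq_mul, ← tsum_mul_left]
  have hsupp : Function.support (fun n : ℕ ↦ exp (-r) * r ^ n / n ! * (n * f n)) ⊆
      Set.range Nat.succ := by
    rintro (_ | n) h
    · simp at h
    · exact ⟨n, rfl⟩
  -- the `n = 0` term vanishes, so reindexing by `n + 1` needs no summability
  rw [← Nat.succ_injective.tsum_eq hsupp]
  congr 1 with n
  rw [Nat.succ_eq_add_one, ← mul_assoc, ← mul_assoc, poisson_succ_mul_natCast_add_one]

theorem integral_fst_mul_prod_poissonMeasure {β : Type*} [MeasurableSpace β] {ν : Measure β}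
    [SFinite ν] (r : ℝ≥0) {f : ℕ × β → ℝ}
    (hf : Integrable (fun p ↦ (p.1 : ℝ) * f p) ((Po(r)).prod ν))
    (hf' : Integrable (fun p ↦ f (p.1 + 1, p.2)) ((Po(r)).prod ν)) :
    ∫ p, (p.1 : ℝ) * f p ∂(Po(r)).prod ν = r * ∫ p, f (p.1 + 1, p.2) ∂(Po(r)).prod ν := by
  rw [integral_prod _ hf, integral_prod _ hf']
  simp only [integral_const_mul]
  exact integral_natCast_mul_poissonMeasure r _

theorem integral_snd_mul_prod_poissonMeasure {α : Type*} [MeasurableSpace α] {μ : Measure α}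
    [SFinite μ] (r : ℝ≥0) {f : α × ℕ → ℝ}
    (hf : Integrable (fun p ↦ (p.2 : ℝ) * f p) (μ.prod Po(r)))
    (hf' : Integrable (fun p ↦ f (p.1, p.2 + 1)) (μ.prod Po(r))) :
    ∫ p, (p.2 : ℝ) * f p ∂μ.prod Po(r) = r * ∫ p, f (p.1, p.2 + 1) ∂μ.prod Po(r) := by
  rw [integral_prod _ hf, integral_prod _ hf', ← integral_const_mul]
  simp only [integral_natCast_mul_poissonMeasure]

section FiniteMeasure

variable {μ : Measure (ℕ × ℕ)} [IsFiniteMeasure μ]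

lemma integrable_fst_div_add : Integrable (fun p : ℕ × ℕ ↦ (p.1 : ℝ) / (p.1 + p.2)) μ :=
  .of_bound .of_discrete 1 (ae_of_all _ fun p ↦ norm_natCast_div_natCast_add_le_one p.1 p.2)

lemma integrable_snd_div_add : Integrable (fun p : ℕ × ℕ ↦ (p.2 : ℝ) / (p.1 + p.2)) μ :=
  .of_bound .of_discrete 1 (ae_of_all _ fun p ↦ by
    simpa only [add_comm] using norm_natCast_div_natCast_add_le_one p.2 p.1)

lemma integrable_inv_fst_add_snd_add_one :
    Integrable (fun p : ℕ × ℕ ↦ ((p.1 : ℝ) + p.2 + 1)⁻¹) μ :=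
  .of_bound .of_discrete 1 (ae_of_all _ fun p ↦
    norm_inv_natCast_add_natCast_add_one_le_one p.1 p.2)

lemma measureReal_one_le_add_eq_integral_add :
    μ.real {p | 1 ≤ p.1 + p.2}
      = ∫ p, (p.1 : ℝ) / (p.1 + p.2) ∂μ + ∫ p, (p.2 : ℝ) / (p.1 + p.2) ∂μ := by
  rw [← integral_add integrable_fst_div_add integrable_snd_div_add,
    ← integral_indicator_one .of_discrete]
  congr with p
  rw [← add_div]
  by_cases h : 1 ≤ p.1 + p.2
  · have : (p.1 : ℝ) + p.2 ≠ 0 := by exact_mod_cast (by omega : p.1 + p.2 ≠ 0)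
    simp [h, this]
  · simp [show p.1 = 0 by omega, show p.2 = 0 by omega]

lemma integral_inv_fst_add_snd_add_one_pos [NeZero μ] :
    0 < ∫ p, ((p.1 : ℝ) + p.2 + 1)⁻¹ ∂μ := by
  rw [integral_pos_iff_support_of_nonneg (fun p ↦ by positivity)
    integrable_inv_fst_add_snd_add_one]
  have : Function.support (fun p : ℕ × ℕ ↦ ((p.1 : ℝ) + p.2 + 1)⁻¹) = Set.univ :=
    Function.support_eq_univ fun p ↦ by positivity
  simp [this, NeZero.ne μ]

end FiniteMeasure

section PoissonPair

variable (r s : ℝ≥0)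

lemma integral_fst_div_add_prod_poissonMeasure :
    ∫ p : ℕ × ℕ, (p.1 : ℝ) / (p.1 + p.2) ∂(Po(r)).prod Po(s)
      = r * ∫ p : ℕ × ℕ, ((p.1 : ℝ) + p.2 + 1)⁻¹ ∂(Po(r)).prod Po(s) := by
  have hshift (p : ℕ × ℕ) : (((p.1 + 1 : ℕ) : ℝ) + p.2)⁻¹ = ((p.1 : ℝ) + p.2 + 1)⁻¹ := by
    push_cast; ring_nf
  have h := integral_fst_mul_prod_poissonMeasure (ν := Po(s)) r
    (f := fun p : ℕ × ℕ ↦ ((p.1 : ℝ) + p.2)⁻¹) integrable_fst_div_add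
    (by simpa only [hshift] using integrable_inv_fst_add_snd_add_one)
  simpa only [← div_eq_mul_inv, hshift] using h

lemma integral_snd_div_add_prod_poissonMeasure :
    ∫ p : ℕ × ℕ, (p.2 : ℝ) / (p.1 + p.2) ∂(Po(r)).prod Po(s)
      = s * ∫ p : ℕ × ℕ, ((p.1 : ℝ) + p.2 + 1)⁻¹ ∂(Po(r)).prod Po(s) := by
  have hshift (p : ℕ × ℕ) : ((p.1 : ℝ) + ((p.2 + 1 : ℕ) : ℝ))⁻¹ = ((p.1 : ℝ) + p.2 + 1)⁻¹ := by
    push_cast; ring_nf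
  have h := integral_snd_mul_prod_poissonMeasure (μ := Po(r)) s
    (f := fun p : ℕ × ℕ ↦ ((p.1 : ℝ) + p.2)⁻¹) integrable_snd_div_add
    (by simpa only [hshift] using integrable_inv_fst_add_snd_add_one)
  simpa only [← div_eq_mul_inv, hshift] using h

theorem integral_fst_div_add_div_measureReal_prod_poissonMeasure :
    (∫ p : ℕ × ℕ, (p.1 : ℝ) / (p.1 + p.2) ∂(Po(r)).prod Po(s))
        / ((Po(r)).prod Po(s)).real {p | 1 ≤ p.1 + p.2} = r / (r + s) := by
  rw [measureReal_one_le_add_eq_integral_add, integral_fst_div_add_prod_poissonMeasure,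
    integral_snd_div_add_prod_poissonMeasure, ← add_mul,
    mul_div_mul_right _ _ integral_inv_fst_add_snd_add_one_pos.ne']

end PoissonPair

end ProbabilityTheory

theorem poisson_ratio_conditional_expectation_general
    {Ω : Type*} [MeasurableSpace Ω] (μ : Measure Ω) [IsProbabilityMeasure μ]
    (a b : ℝ) (ha : 0 ≤ a) (hb : 0 ≤ b)
    (X Y : Ω → ℕ) (hX : Measurable X) (hY : Measurable Y)
    (hXY : IndepFun X Y μ)
    (hXd : ∀ k : ℕ, μ {ω | X ω = k} = ENNReal.ofReal (Real.exp (-a) * a ^ k / (k.factorial : ℝ)))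
    (hYd : ∀ k : ℕ, μ {ω | Y ω = k} = ENNReal.ofReal (Real.exp (-b) * b ^ k / (k.factorial : ℝ))) :
    (∫ ω, (if 1 ≤ X ω + Y ω then (X ω : ℝ) / ((X ω : ℝ) + (Y ω : ℝ)) else 0) ∂μ)
        / (μ {ω | 1 ≤ X ω + Y ω}).toReal
      = a / (a + b) := by
  lift a to ℝ≥0 using ha
  lift b to ℝ≥0 using hb
  have hXlaw : HasLaw X Po(a) μ :=
    hasLaw_of_measure_preimage_singleton hX fun k ↦ by rw [poissonMeasure_singleton]; exact hXd k
  have hYlaw : HasLaw Y Po(b) μ :=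
    hasLaw_of_measure_preimage_singleton hY fun k ↦ by rw [poissonMeasure_singleton]; exact hYd k
  have hlaw := hXY.hasLaw_prodMk hXlaw hYlaw
  have hnum : ∫ ω, (if 1 ≤ X ω + Y ω then (X ω : ℝ) / ((X ω : ℝ) + (Y ω : ℝ)) else 0) ∂μ
      = ∫ p : ℕ × ℕ, (p.1 : ℝ) / (p.1 + p.2) ∂(Po(a)).prod Po(b) := by
    rw [← hlaw.integral_comp .of_discrete]
    congr with ω
    split_ifs with h
    · rfl
    · simp [show X ω = 0 by omega]
  rw [hnum, ← measureReal_def, hlaw.measureReal_eq (p := fun p ↦ 1 ≤ p.1 + p.2) .of_discrete]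
  exact integral_fst_div_add_div_measureReal_prod_poissonMeasure _ _

/-- If `X ~ Poisson(a)` and `Y ~ Poisson(b)` are independent with `a + b > 0`, then the
conditional expectation of `X/(X+Y)` given the event `{X+Y ≥ 1}` equals `a/(a+b)`. -/
theorem poisson_ratio_conditional_expectation
    {Ω : Type*} [MeasurableSpace Ω] (μ : Measure Ω) [IsProbabilityMeasure μ]
    (a b : ℝ) (ha : 0 ≤ a) (hb : 0 ≤ b) (hab : 0 < a + b)
    (X Y : Ω → ℕ) (hX : Measurable X) (hY : Measurable Y)
    (hXY : IndepFun X Y μ)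
    (hXd : ∀ k : ℕ, μ {ω | X ω = k} = ENNReal.ofReal (Real.exp (-a) * a ^ k / (k.factorial : ℝ)))
    (hYd : ∀ k : ℕ, μ {ω | Y ω = k} = ENNReal.ofReal (Real.exp (-b) * b ^ k / (k.factorial : ℝ))) :
    (∫ ω, (if 1 ≤ X ω + Y ω then (X ω : ℝ) / ((X ω : ℝ) + (Y ω : ℝ)) else 0) ∂μ)
        / (μ {ω | 1 ≤ X ω + Y ω}).toReal
      = a / (a + b) :=
  poisson_ratio_conditional_expectation_general μ a b ha hb X Y hX hY hXY hXd hYd
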